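/- Let n ≥ 2 and let M = Mₙ be the n-fuse function. For every x ≥ 0 on which M terminates and every 0 ≤ i ≤ n, we have tᵢ(x) ≥ i·M(x), where t₀(x)=1 and t_{i+1}(x) = M(x - tᵢ(x)). -/
import Mathlib

/-- The computation graph of the `n`-fuse algorithm `Mₙ` (see the paper):
`Mₙ(x) = -x` for `x < 0`; for `x ≥ 0`, `Mₙ(x) = tₙ(x)/n` where `t₀(x) = 1` and
`t_{i+1}(x) = Mₙ(x - tᵢ(x))`. -/
inductive MnGraph (n : ℕ) : ℝ → ℝ → Prop
  | neg (x : ℝ) : x < 0 → MnGraph n x (-x)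
  | nonneg (x : ℝ) (t : ℕ → ℝ) : 0 ≤ x → t 0 = 1 →
      (∀ i < n, MnGraph n (x - t i) (t (i + 1))) → MnGraph n x (t n / n)

/-- Fuel-bounded version of the computation graph. -/
def GB (n : ℕ) : ℕ → ℝ → ℝ → Prop
  | 0, _, _ => False
  | (k+1), x, y => (x < 0 ∧ y = -x) ∨
      (0 ≤ x ∧ ∃ t : ℕ → ℝ, t 0 = 1 ∧ (∀ i < n, GB n k (x - t i) (t (i+1))) ∧ y = t n / n)

/-- A fuel-bounded trace at `x`. -/
def Tr (n k : ℕ) (x : ℝ) (t : ℕ → ℝ) : Prop :=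
  t 0 = 1 ∧ ∀ i < n, GB n k (x - t i) (t (i+1))

lemma GB_succ (n : ℕ) : ∀ k x y, GB n k x y → GB n (k+1) x y := by
  intro k
  induction k with
  | zero => intro x y h; exact h.elim
  | succ k ih =>
    intro x y h
    rcases h with ⟨h1, h2⟩ | ⟨h1, t, h2, h3, h4⟩
    · exact Or.inl ⟨h1, h2⟩
    · exact Or.inr ⟨h1, t, h2, fun i hi => ih _ _ (h3 i hi), h4⟩

lemma GB_mono (n : ℕ) {k k' : ℕ} (h : k ≤ k') {x y : ℝ} (hg : GB n k x y) :
    GB n k' x y := by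
  induction h with
  | refl => exact hg
  | step _ ih => exact GB_succ n _ _ _ ih

lemma GB_neg_out (n k : ℕ) (x y : ℝ) (h : GB n k x y) (hx : x < 0) : y = -x := by
  cases k with
  | zero => exact h.elim
  | succ k =>
    rcases h with ⟨_, h2⟩ | ⟨h1, _⟩
    · exact h2
    · linarith

lemma GB_nonneg_inv (n k : ℕ) (x y : ℝ) (h : GB n k x y) (hx : 0 ≤ x) :
    ∃ k' t, k = k' + 1 ∧ Tr n k' x t ∧ y = t n / n := by
  cases k with
  | zero => exact h.elim
  | succ k =>
    rcases h with ⟨h1, _⟩ | ⟨_, t, h2, h3, h4⟩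
    · linarith
    · exact ⟨k, t, rfl, ⟨h2, h3⟩, h4⟩

lemma GB_out_nonneg (n : ℕ) (hn : 1 ≤ n) : ∀ k x y, GB n k x y → 0 ≤ y := by
  intro k
  induction k with
  | zero => intro x y h; exact h.elim
  | succ k ih =>
    intro x y h
    rcases h with ⟨h1, h2⟩ | ⟨_, t, _, h3, h4⟩
    · rw [h2]; linarith
    · have hn' : n - 1 < n := by omega
      have := ih _ _ (h3 (n-1) hn')
      have hen : n - 1 + 1 = n := by omega
      rw [hen] at this
      rw [h4]
      have hnp : (0:ℝ) < n := by exact_mod_cast hn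
      positivity

/-- Combined statement: exactness lemma `E` and main inequality `S`, by strong
induction on fuel. -/
theorem SandE (n : ℕ) (hn : 1 ≤ n) : ∀ K : ℕ,
    (∀ u δ σ τ ku kv, 0 ≤ u → 0 ≤ δ → ku < K → kv ≤ K → Tr n ku u σ →
        Tr n kv (u + δ) τ → (n:ℝ) * δ < σ n →
        ∀ i ≤ n, τ i = σ i - (i:ℝ) * δ)
    ∧ (∀ x t, 0 ≤ x → Tr n K x t → ∀ i ≤ n, (i : ℝ) * (t n / n) ≤ t i) := by
  have hn0 : (0:ℝ) < n := by exact_mod_cast hn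
  intro K
  induction K using Nat.strong_induction_on with
  | _ K IH =>
  have hE : ∀ u δ σ τ ku kv, 0 ≤ u → 0 ≤ δ → ku < K → kv ≤ K → Tr n ku u σ →
      Tr n kv (u + δ) τ → (n:ℝ) * δ < σ n →
      ∀ i ≤ n, τ i = σ i - (i:ℝ) * δ := by
    intro u δ σ τ ku kv hu hδ hku hkv hσ hτ hδσ
    have hS : ∀ j ≤ n, (j:ℝ) * (σ n / n) ≤ σ j := (IH ku hku).2 u σ hu hσ
    have hδ' : δ < σ n / n := by
      rw [lt_div_iff₀ hn0]; nlinarith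
    have key : ∀ i, i < n → ((i:ℝ) + 1) * δ < σ (i+1) := by
      intro i hi
      have h1 := hS (i+1) hi
      push_cast at h1
      nlinarith
    intro i
    induction i with
    | zero => intro _; simp [hτ.1, hσ.1]
    | succ i ih =>
      intro hsn
      have hi : i < n := hsn
      have hti : τ i = σ i - (i:ℝ) * δ := ih (le_of_lt hi)
      have hgσ := hσ.2 i hi
      have hgτ := hτ.2 i hi
      by_cases hc : u - σ i < 0
      · have e1 : σ (i+1) = σ i - u := by
          have := GB_neg_out n ku _ _ hgσ hc; rw [this]; ring
        have hlt : ((i:ℝ) + 1) * δ < σ i - u := by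
          have := key i hi; rw [e1] at this; linarith
        have hc2 : u + δ - τ i < 0 := by rw [hti]; nlinarith
        have e2 := GB_neg_out n kv _ _ hgτ hc2
        rw [e2, hti, e1]; push_cast; ring
      · push_neg at hc
        obtain ⟨ku', σ', hkue, hσ', he⟩ := GB_nonneg_inv n ku _ _ hgσ hc
        have hiR : (0:ℝ) ≤ (i:ℝ) := by positivity
        have hc2 : (0:ℝ) ≤ u + δ - τ i := by rw [hti]; nlinarith
        obtain ⟨kv', τ', hkve, hτ', he2⟩ := GB_nonneg_inv n kv _ _ hgτ hc2
        have hσn' : σ' n = (n:ℝ) * σ (i+1) := by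
          rw [eq_div_iff hn0.ne'] at he; rw [← he]; ring
        have harg : (u - σ i) + ((i:ℝ) + 1) * δ = u + δ - τ i := by
          rw [hti]; ring
        have hτ'' : Tr n kv' ((u - σ i) + ((i:ℝ)+1) * δ) τ' := by
          rw [harg]; exact hτ'
        have hcond : (n:ℝ) * (((i:ℝ)+1) * δ) < σ' n := by
          rw [hσn']
          have := key i hi
          nlinarith
        have hEE := (IH (K-1) (by omega)).1 (u - σ i) (((i:ℝ)+1) * δ) σ' τ' ku' kv'
          hc (by positivity) (by omega) (by omega) hσ' hτ'' hcond n le_rfl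
        rw [he2, hEE, hσn']
        push_cast
        field_simp
  refine ⟨hE, ?_⟩
  intro x t hx htr
  have tpos : ∀ i ≤ n, 0 ≤ t i := by
    intro i hi
    cases i with
    | zero => rw [htr.1]; norm_num
    | succ j => exact GB_out_nonneg n hn K _ _ (htr.2 j hi)
  have tn0 : 0 ≤ t n := tpos n le_rfl
  have htnn : 0 ≤ t n / n := div_nonneg tn0 hn0.le
  have hstep : ∀ i, i < n → t (i+1) ≤ t i + t n / n := by
    intro i hi
    by_cases hc : x - t i < 0
    · have := GB_neg_out n K _ _ (htr.2 i hi) hc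
      rw [this]; linarith
    · push_neg at hc
      by_cases hc2 : t (i+1) ≤ t i
      · linarith
      · push_neg at hc2
        obtain ⟨k', σ', hke, hσ', he⟩ := GB_nonneg_inv n K _ _ (htr.2 i hi) hc
        have hσn' : σ' n = (n:ℝ) * t (i+1) := by
          rw [eq_div_iff hn0.ne'] at he; rw [← he]; ring
        have htr' : Tr n K ((x - t i) + t i) t := by
          have : (x - t i) + t i = x := by ring
          rw [this]; exact htr
        have hcond : (n:ℝ) * t i < σ' n := by
          rw [hσn']; nlinarith
        have hEE := hE (x - t i) (t i) σ' t k' K hc (tpos i hi.le) (by omega) le_rfl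
          hσ' htr' hcond n le_rfl
        rw [hσn'] at hEE
        have hdiv : ((n:ℝ) * t (i+1) - (n:ℝ) * t i) / n = t (i+1) - t i := by
          field_simp
        rw [hEE, hdiv]
        linarith
  have hdown : ∀ j ≤ n, ((n - j : ℕ):ℝ) * (t n / n) ≤ t (n - j) := by
    intro j
    induction j with
    | zero =>
      intro _
      simp only [Nat.sub_zero]
      rw [mul_div_assoc', mul_comm, mul_div_assoc, div_self hn0.ne', mul_one]
    | succ j ihj =>
      intro hj
      have hj' : j ≤ n := by omega
      have h1 := ihj hj'
      have hlt : n - (j+1) < n := by omega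
      have h2 := hstep (n - (j+1)) hlt
      have hee : n - (j+1) + 1 = n - j := by omega
      rw [hee] at h2
      have hcast : ((n - j : ℕ):ℝ) = ((n - (j+1) : ℕ):ℝ) + 1 := by
        have : (n - j : ℕ) = (n - (j+1) : ℕ) + 1 := by omega
        rw [this]; push_cast; ring
      rw [hcast] at h1
      nlinarith
  intro i hi
  have := hdown (n - i) (by omega)
  have hee : n - (n - i) = i := by omega
  rw [hee] at this
  exact this

lemma exists_uniform (n : ℕ) (P : ℕ → ℕ → Prop) (mono : ∀ i k k', k ≤ k' → P i k → P i k')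
    (h : ∀ i < n, ∃ k, P i k) : ∃ K, ∀ i < n, P i K := by
  induction n with
  | zero => exact ⟨0, by omega⟩
  | succ m ih =>
    obtain ⟨K1, hK1⟩ := ih (fun i hi => h i (by omega))
    obtain ⟨k, hk⟩ := h m (by omega)
    refine ⟨max K1 k, fun i hi => ?_⟩
    rcases Nat.lt_succ_iff_lt_or_eq.mp hi with hi' | rfl
    · exact mono i K1 _ (le_max_left _ _) (hK1 i hi')
    · exact mono i k _ (le_max_right _ _) hk

lemma toGB (n : ℕ) {a b : ℝ} (h : MnGraph n a b) : ∃ k, GB n k a b := by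
  induction h with
  | neg x hx => exact ⟨1, Or.inl ⟨hx, rfl⟩⟩
  | nonneg x t hx ht0 hrec ih =>
    have h' : ∀ i < n, ∃ k, GB n k (x - t i) (t (i+1)) := ih
    obtain ⟨K, hK⟩ := exists_uniform n (fun i k => GB n k (x - t i) (t (i+1)))
      (fun i k k' hkk hg => GB_mono n hkk hg) h'
    exact ⟨K + 1, Or.inr ⟨hx, t, ht0, hK, rfl⟩⟩

/-- For every `x ≥ 0` on which `Mₙ` terminates (with auxiliary values
`t₀(x), …, tₙ(x)` and `Mₙ(x) = tₙ(x)/n`), we have `tᵢ(x) ≥ i·Mₙ(x)` for all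
`0 ≤ i ≤ n`. -/
theorem Mn_t_ge (n : ℕ) (hn : 2 ≤ n) (x : ℝ) (hx : 0 ≤ x) (t : ℕ → ℝ)
    (ht0 : t 0 = 1) (ht : ∀ i < n, MnGraph n (x - t i) (t (i + 1)))
    (i : ℕ) (hi : i ≤ n) :
    (i : ℝ) * (t n / n) ≤ t i := by
  have hGB : ∀ i < n, ∃ k, GB n k (x - t i) (t (i+1)) := fun i hi => toGB n (ht i hi)
  obtain ⟨K, hK⟩ := exists_uniform n (fun i k => GB n k (x - t i) (t (i+1)))
    (fun i k k' hkk hg => GB_mono n hkk hg) hGB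
  exact (SandE n (by omega) K).2 x t hx ⟨ht0, hK⟩ i hi
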